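/- (Existence of the pile growth rate in expectation.) Let (α_k, σ_k), k ≥ 0, be an i.i.d. sequence of random jobs taking values in {1,…,s} × [0,∞) with E[σ_0] < ∞, and let H_n be the pile sequence: H_0 = 0, H_{k+1} = Ψ_{α_k,σ_k}(H_k). Then the sequence a_n = E[|H_n|_∞] is finite and subadditive (a_{m+n} ≤ a_m + a_n for all m, n), and consequently a_n/n converges as n → ∞ to the finite nonnegative limit inf_{n ≥ 1} a_n/n. -/

import Mathlib

/-!
`Ψ_{α,σ}` is monotone and commutes with adding a constant to every coordinate. Since `H_m` lies
below the constant vector `|H_m|_∞`, the pile after `m + n` jobs lies below the pile built by jobs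
`m, …, m + n - 1` alone, raised by `|H_m|_∞`. For an i.i.d. job sequence the shifted sequence has
the same law as the original one, so taking expectations gives `a_{m+n} ≤ a_m + a_n`; integrability
comes from `|H_n|_∞ ≤ σ_0 + ⋯ + σ_{n-1}`, and Fekete's lemma gives the limit.
-/

/-- The nondecreasing rearrangement operator `R` on vectors of ℝ^s. -/
noncomputable def sortVec {s : ℕ} (v : Fin s → ℝ) : Fin s → ℝ := v ∘ Tuple.sort v

/-- The all-ones vector `U`. -/
def Uvec (s : ℕ) : Fin s → ℝ := fun _ => 1

/-- `L(α)`: coordinate `i` is `1` if `i ≤ α` and `0` otherwise (indices 0-based,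
so `α : Fin s` represents the number of requested servers `α+1 ∈ {1,…,s}`). -/
def Lvec {s : ℕ} (α : Fin s) : Fin s → ℝ := fun i => if i ≤ α then 1 else 0

/-- `S(α, W)`: coordinate `i` is `max (W^α) (W^i)`. -/
def Svec {s : ℕ} (α : Fin s) (W : Fin s → ℝ) : Fin s → ℝ := fun i => max (W α) (W i)

/-- A vector is ordered if its coordinates are nondecreasing and nonnegative. -/
def IsOrdered {s : ℕ} (W : Fin s → ℝ) : Prop := Monotone W ∧ ∀ i, 0 ≤ W i

/-- The one-step MJSRE map `Φ_{α,σ,τ}(W) = R(S(α,W) + σ·L(α) − τ·U)⁺`. -/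
noncomputable def Phi {s : ℕ} (α : Fin s) (σ τ : ℝ) (W : Fin s → ℝ) : Fin s → ℝ :=
  sortVec (fun i => max (Svec α W i + σ * Lvec α i - τ * Uvec s i) 0)

/-- The one-step pile map `Ψ_{α,σ}(W) = R(S(α,W) + σ·L(α))`. -/
noncomputable def Psi {s : ℕ} (α : Fin s) (σ : ℝ) (W : Fin s → ℝ) : Fin s → ℝ :=
  sortVec (fun i => Svec α W i + σ * Lvec α i)

/-- Pile sequence: `H 0 = 0`, `H (k+1) = Ψ_{α_k,σ_k}(H k)`. -/
noncomputable def pileSeq {s : ℕ} (a : ℕ → Fin s) (σf : ℕ → ℝ) : ℕ → (Fin s → ℝ)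
  | 0 => 0
  | k + 1 => Psi (a k) (σf k) (pileSeq a σf k)

open MeasureTheory ProbabilityTheory Filter Topology

namespace Equiv.Perm

theorem exists_le_le_apply {n : ℕ} (σ : Equiv.Perm (Fin n)) (k : Fin n) : ∃ j ≤ k, k ≤ σ j := by
  by_contra! h
  have hsub : (Finset.Iic k).map σ.toEmbedding ⊆ Finset.Iio k := by
    intro x hx
    obtain ⟨j, hj, rfl⟩ := Finset.mem_map.1 hx
    exact Finset.mem_Iio.2 (h j (Finset.mem_Iic.1 hj))
  have := Finset.card_le_card hsub
  simp only [Finset.card_map, Fin.card_Iic, Fin.card_Iio] at this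
  omega

end Equiv.Perm

section sortVec

variable {s : ℕ}

theorem sortVec_eq_iInf_iSup (v : Fin s → ℝ) (k : Fin s) :
    sortVec v k = ⨅ π : Equiv.Perm (Fin s), ⨆ j : Set.Iic k, v (π j) := by
  have hmono : Monotone (sortVec v) := Tuple.monotone_sort v
  apply le_antisymm
  · refine le_ciInf fun π => ?_
    obtain ⟨j, hjk, hkj⟩ := Equiv.Perm.exists_le_le_apply ((Tuple.sort v).symm * π) k
    refine le_ciSup_of_le (Set.finite_range _).bddAbove ⟨j, hjk⟩ ?_
    calc sortVec v k ≤ sortVec v ((Tuple.sort v).symm (π j)) := hmono hkj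
      _ = v (π j) := by simp [sortVec]
  · refine ciInf_le_of_le (Set.finite_range _).bddBelow (Tuple.sort v) ?_
    have : Nonempty (Set.Iic k) := ⟨⟨k, Set.mem_Iic.2 le_rfl⟩⟩
    exact ciSup_le fun j => hmono j.2

theorem sortVec_mono : Monotone (sortVec : (Fin s → ℝ) → Fin s → ℝ) := by
  intro v w h k
  simp only [sortVec_eq_iInf_iSup]
  exact ciInf_mono (Set.finite_range _).bddBelow fun π =>
    ciSup_mono (Set.finite_range _).bddAbove fun j => h _

theorem sortVec_add_const (v : Fin s → ℝ) (c : ℝ) :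
    sortVec (fun i => v i + c) = fun k => sortVec v k + c :=
  Tuple.unique_monotone (Tuple.monotone_sort _) fun _ _ hab =>
    (add_le_add_iff_right c).2 (Tuple.monotone_sort v hab)

theorem measurable_sortVec : Measurable (sortVec : (Fin s → ℝ) → Fin s → ℝ) := by
  refine measurable_pi_lambda _ fun k => ?_
  simp only [sortVec_eq_iInf_iSup]
  exact Measurable.iInf fun π => Measurable.iSup fun j => measurable_pi_apply _

end sortVec

section Psi

variable {s : ℕ}

theorem Lvec_nonneg (α i : Fin s) : 0 ≤ Lvec α i := by
  unfold Lvec; split_ifs <;> norm_num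

theorem Lvec_le_one (α i : Fin s) : Lvec α i ≤ 1 := by
  unfold Lvec; split_ifs <;> norm_num

theorem Psi_nonneg (α : Fin s) {σ : ℝ} (hσ : 0 ≤ σ) {W : Fin s → ℝ} (hW : 0 ≤ W) :
    0 ≤ Psi α σ W := fun _ =>
  add_nonneg (le_max_of_le_right (hW _)) (mul_nonneg hσ (Lvec_nonneg _ _))

theorem Psi_le_add (α : Fin s) {σ : ℝ} (hσ : 0 ≤ σ) {W : Fin s → ℝ} {b : ℝ}
    (hW : ∀ i, W i ≤ b) (k : Fin s) : Psi α σ W k ≤ b + σ :=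
  add_le_add (max_le (hW _) (hW _)) (mul_le_of_le_one_right hσ (Lvec_le_one _ _))

theorem Psi_mono (α : Fin s) (σ : ℝ) : Monotone (Psi α σ) := fun _ _ h =>
  sortVec_mono fun i => add_le_add_left (max_le_max (h α) (h i)) _

theorem Psi_add_const (α : Fin s) (σ c : ℝ) (W : Fin s → ℝ) :
    Psi α σ (fun i => W i + c) = fun k => Psi α σ W k + c := by
  simp only [Psi]
  rw [← sortVec_add_const]
  congr 1
  funext i
  simp only [Svec, max_add_add_right]
  ring

theorem measurable_Psi :
    Measurable fun p : Fin s × ℝ × (Fin s → ℝ) => Psi p.1 p.2.1 p.2.2 := by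
  refine measurable_from_prod_countable_right fun α => measurable_sortVec.comp ?_
  refine measurable_pi_lambda _ fun i => ?_
  simp only [Svec]
  fun_prop

end Psi

section pileSeq

variable {s : ℕ}

theorem pileSeq_nonneg (a : ℕ → Fin s) {σf : ℕ → ℝ} (hσ : 0 ≤ σf) (n : ℕ) :
    0 ≤ pileSeq a σf n := by
  induction n with
  | zero => exact le_rfl
  | succ n ih => exact Psi_nonneg _ (hσ n) ih

theorem pileSeq_le_sum (a : ℕ → Fin s) {σf : ℕ → ℝ} (hσ : 0 ≤ σf) (n : ℕ) (i : Fin s) :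
    pileSeq a σf n i ≤ ∑ k ∈ Finset.range n, σf k := by
  induction n generalizing i with
  | zero => simp [pileSeq]
  | succ n ih =>
    rw [Finset.sum_range_succ]
    exact Psi_le_add _ (hσ n) ih i

theorem pileSeq_add_le (a : ℕ → Fin s) (σf : ℕ → ℝ) (m n : ℕ) (i : Fin s) :
    pileSeq a σf (m + n) i ≤
      pileSeq (fun k => a (m + k)) (fun k => σf (m + k)) n i + ⨆ j, pileSeq a σf m j := by
  induction n generalizing i with
  | zero => simpa [pileSeq] using le_ciSup (Set.finite_range _).bddAbove i
  | succ n ih =>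
    calc pileSeq a σf (m + (n + 1)) i
        ≤ Psi (a (m + n)) (σf (m + n)) (fun j =>
            pileSeq (fun k => a (m + k)) (fun k => σf (m + k)) n j
              + ⨆ j, pileSeq a σf m j) i := Psi_mono _ _ ih i
      _ = _ := congrFun (Psi_add_const _ _ _ _) i

theorem measurable_pileSeq (n : ℕ) :
    Measurable fun J : ℕ → Fin s × ℝ => pileSeq (fun k => (J k).1) (fun k => (J k).2) n := by
  induction n with
  | zero => exact measurable_const
  | succ n ih =>
    exact measurable_Psi.comp (((measurable_pi_apply n).fst).prodMk
      (((measurable_pi_apply n).snd).prodMk ih))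

end pileSeq

section pileHeight

variable {s : ℕ}

/-- `|H_n|_∞` for the job sequence `J`. -/
noncomputable def pileHeight (n : ℕ) (J : ℕ → Fin s × ℝ) : ℝ :=
  ⨆ i, pileSeq (fun k => (J k).1) (fun k => (J k).2) n i

variable {J : ℕ → Fin s × ℝ}

theorem pileHeight_nonneg (hJ : ∀ k, 0 ≤ (J k).2) (n : ℕ) : 0 ≤ pileHeight n J :=
  Real.iSup_nonneg (pileSeq_nonneg _ hJ n)

theorem pileHeight_le_sum (hJ : ∀ k, 0 ≤ (J k).2) (n : ℕ) :
    pileHeight n J ≤ ∑ k ∈ Finset.range n, (J k).2 :=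
  Real.iSup_le (pileSeq_le_sum _ hJ n) (Finset.sum_nonneg fun k _ => hJ k)

theorem pileHeight_add_le (hJ : ∀ k, 0 ≤ (J k).2) (m n : ℕ) :
    pileHeight (m + n) J ≤ pileHeight m J + pileHeight n (fun k => J (m + k)) := by
  refine Real.iSup_le (fun i => ?_)
    (add_nonneg (pileHeight_nonneg hJ m) (pileHeight_nonneg (fun k => hJ (m + k)) n))
  rw [add_comm (pileHeight m J)]
  exact (pileSeq_add_le _ _ m n i).trans
    (add_le_add_left (le_ciSup (Set.finite_range _).bddAbove i) _)

theorem measurable_pileHeight (n : ℕ) :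
    Measurable (pileHeight n : (ℕ → Fin s × ℝ) → ℝ) :=
  Measurable.iSup fun i => (measurable_pi_apply i).comp (measurable_pileSeq n)

end pileHeight

section Probability

variable {Ω : Type*} [MeasurableSpace Ω] {μ : Measure Ω}

theorem identDistrib_pi_of_iIndepFun {ι β : Type*} [MeasurableSpace β] {X Y : ι → Ω → β}
    (hX : ∀ i, Measurable (X i)) (hY : ∀ i, Measurable (Y i))
    (hXind : iIndepFun X μ) (hYind : iIndepFun Y μ) (h : ∀ i, IdentDistrib (X i) (Y i) μ μ) :
    IdentDistrib (fun ω i => X i ω) (fun ω i => Y i ω) μ μ where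
  aemeasurable_fst := (measurable_pi_lambda _ hX).aemeasurable
  aemeasurable_snd := (measurable_pi_lambda _ hY).aemeasurable
  map_eq := by
    rw [hXind.map_fun_eq_infinitePi_map hX, hYind.map_fun_eq_infinitePi_map hY]
    simp_rw [(h _).map_eq]

variable {s : ℕ} {X : Ω → ℕ → Fin s × ℝ}

theorem integrable_pileHeight (hX : Measurable X) (hσ : ∀ ω k, 0 ≤ (X ω k).2)
    (hint : ∀ k, Integrable (fun ω => (X ω k).2) μ) (n : ℕ) :
    Integrable (fun ω => pileHeight n (X ω)) μ := by
  refine (integrable_finsetSum (Finset.range n) fun k _ => hint k).mono'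
    ((measurable_pileHeight n).comp hX).aestronglyMeasurable (ae_of_all _ fun ω => ?_)
  rw [Real.norm_of_nonneg (pileHeight_nonneg (hσ ω) n)]
  exact pileHeight_le_sum (hσ ω) n

theorem integral_pileHeight_add_le (hX : Measurable X) (hσ : ∀ ω k, 0 ≤ (X ω k).2)
    (hint : ∀ k, Integrable (fun ω => (X ω k).2) μ)
    (hstat : ∀ m, IdentDistrib (fun ω k => X ω (m + k)) X μ μ) (m n : ℕ) :
    ∫ ω, pileHeight (m + n) (X ω) ∂μ
      ≤ ∫ ω, pileHeight m (X ω) ∂μ + ∫ ω, pileHeight n (X ω) ∂μ := by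
  have hshift := (hstat m).comp (measurable_pileHeight n)
  have hint_shift : Integrable (fun ω => pileHeight n (fun k => X ω (m + k))) μ :=
    hshift.integrable_iff.2 (integrable_pileHeight hX hσ hint n)
  calc ∫ ω, pileHeight (m + n) (X ω) ∂μ
      ≤ ∫ ω, pileHeight m (X ω) + pileHeight n (fun k => X ω (m + k)) ∂μ :=
        integral_mono (integrable_pileHeight hX hσ hint _)
          ((integrable_pileHeight hX hσ hint m).add hint_shift)
          fun ω => pileHeight_add_le (hσ ω) m n
    _ = ∫ ω, pileHeight m (X ω) ∂μ + ∫ ω, pileHeight n (X ω) ∂μ := by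
        rw [integral_add (integrable_pileHeight hX hσ hint m) hint_shift]
        exact congrArg _ hshift.integral_eq

end Probability

theorem Subadditive.tendsto_iInf_pnat {u : ℕ → ℝ} (h : Subadditive u)
    (hbdd : BddBelow (Set.range fun n => u n / n)) :
    Tendsto (fun n => u n / n) atTop (𝓝 (⨅ n : ℕ+, u n / n)) := by
  convert h.tendsto_lim hbdd using 2
  rw [Subadditive.lim, iInf]
  congr 1
  ext x
  constructor
  · rintro ⟨n, rfl⟩
    exact ⟨n, n.pos, rfl⟩
  · rintro ⟨n, hn, rfl⟩
    exact ⟨⟨n, hn⟩, rfl⟩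

theorem pile_growth_rate_general
    {Ω : Type*} [MeasurableSpace Ω] (μ : Measure Ω)
    (s : ℕ) (ξ : ℕ → Ω → Fin s × ℝ)
    (hmeas : ∀ k, Measurable (ξ k))
    (hindep : iIndepFun ξ μ)
    (hident : ∀ k, IdentDistrib (ξ k) (ξ 0) μ μ)
    (hσ : ∀ k ω, 0 ≤ (ξ k ω).2)
    (hint : Integrable (fun ω => (ξ 0 ω).2) μ) :
    (∀ n : ℕ, Integrable
        (fun ω => ⨆ i, pileSeq (fun k => (ξ k ω).1) (fun k => (ξ k ω).2) n i) μ) ∧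
    (∀ m n : ℕ,
        (∫ ω, (⨆ i, pileSeq (fun k => (ξ k ω).1) (fun k => (ξ k ω).2) (m + n) i) ∂μ)
          ≤ (∫ ω, (⨆ i, pileSeq (fun k => (ξ k ω).1) (fun k => (ξ k ω).2) m i) ∂μ)
            + ∫ ω, (⨆ i, pileSeq (fun k => (ξ k ω).1) (fun k => (ξ k ω).2) n i) ∂μ) ∧
    Tendsto
      (fun n : ℕ =>
        (∫ ω, (⨆ i, pileSeq (fun k => (ξ k ω).1) (fun k => (ξ k ω).2) n i) ∂μ) / n)
      atTop
      (𝓝 (⨅ n : ℕ+,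
        (∫ ω, (⨆ i, pileSeq (fun k => (ξ k ω).1) (fun k => (ξ k ω).2) n i) ∂μ) / n)) ∧
    0 ≤ ⨅ n : ℕ+,
        (∫ ω, (⨆ i, pileSeq (fun k => (ξ k ω).1) (fun k => (ξ k ω).2) n i) ∂μ) / n := by
  let X : Ω → ℕ → Fin s × ℝ := fun ω k => ξ k ω
  have hX : Measurable X := measurable_pi_lambda _ hmeas
  have hintX : ∀ k, Integrable (fun ω => (X ω k).2) μ := fun k =>
    ((hident k).comp measurable_snd).integrable_iff.2 hint
  have hstat : ∀ m, IdentDistrib (fun ω k => X ω (m + k)) X μ μ := fun m =>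
    identDistrib_pi_of_iIndepFun (fun k => hmeas _) hmeas
      (hindep.precomp (add_right_injective m)) hindep
      fun k => (hident (m + k)).trans (hident k).symm
  have hsub : Subadditive fun n => ∫ ω, pileHeight n (X ω) ∂μ :=
    integral_pileHeight_add_le hX (fun ω k => hσ k ω) hintX hstat
  have hratio_nonneg : ∀ n : ℕ, 0 ≤ (∫ ω, pileHeight n (X ω) ∂μ) / n := fun n =>
    div_nonneg (integral_nonneg fun ω => pileHeight_nonneg (fun k => hσ k ω) n) n.cast_nonneg
  exact ⟨integrable_pileHeight hX (fun ω k => hσ k ω) hintX, hsub,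
    hsub.tendsto_iInf_pnat ⟨0, Set.forall_mem_range.2 hratio_nonneg⟩,
    Real.iInf_nonneg fun n => hratio_nonneg n⟩

/-- Existence of the pile growth rate in expectation: for i.i.d. jobs
`(α_k, σ_k) ∈ {1,…,s} × [0,∞)` with `E[σ_0] < ∞`, the sequence `a_n = E[|H_n|_∞]` is
finite (the integrand is integrable) and subadditive, hence `a_n / n` converges to the
finite nonnegative limit `inf_{n ≥ 1} a_n / n`. -/
theorem pile_growth_rate
    {Ω : Type*} [MeasurableSpace Ω] (μ : Measure Ω) [IsProbabilityMeasure μ]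
    (s : ℕ) (hs : 0 < s) (ξ : ℕ → Ω → Fin s × ℝ)
    (hmeas : ∀ k, Measurable (ξ k))
    (hindep : iIndepFun ξ μ)
    (hident : ∀ k, IdentDistrib (ξ k) (ξ 0) μ μ)
    (hσ : ∀ k ω, 0 ≤ (ξ k ω).2)
    (hint : Integrable (fun ω => (ξ 0 ω).2) μ) :
    (∀ n : ℕ, Integrable
        (fun ω => ⨆ i, pileSeq (fun k => (ξ k ω).1) (fun k => (ξ k ω).2) n i) μ) ∧
    (∀ m n : ℕ,
        (∫ ω, (⨆ i, pileSeq (fun k => (ξ k ω).1) (fun k => (ξ k ω).2) (m + n) i) ∂μ)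
          ≤ (∫ ω, (⨆ i, pileSeq (fun k => (ξ k ω).1) (fun k => (ξ k ω).2) m i) ∂μ)
            + ∫ ω, (⨆ i, pileSeq (fun k => (ξ k ω).1) (fun k => (ξ k ω).2) n i) ∂μ) ∧
    Tendsto
      (fun n : ℕ =>
        (∫ ω, (⨆ i, pileSeq (fun k => (ξ k ω).1) (fun k => (ξ k ω).2) n i) ∂μ) / n)
      atTop
      (𝓝 (⨅ n : ℕ+,
        (∫ ω, (⨆ i, pileSeq (fun k => (ξ k ω).1) (fun k => (ξ k ω).2) n i) ∂μ) / n)) ∧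
    0 ≤ ⨅ n : ℕ+,
        (∫ ω, (⨆ i, pileSeq (fun k => (ξ k ω).1) (fun k => (ξ k ω).2) n i) ∂μ) / n :=
  pile_growth_rate_general μ s ξ hmeas hindep hident hσ hint
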